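/- arXiv:1807.06528 — 3 statements merged into one kernel-verified Lean document; each statement's English description precedes it below -/
import Mathlib

section
/- Let {x_{i,n}} (1 ≤ i ≤ n) be real numbers with |x_{i,n}| ≤ M for all i, n, and suppose that for every k ∈ ℕ the limit h_k = lim_{n→∞} (1/n) ∑_{i=1}^n x_{i,n}^k exists in ℝ. Then there exists a measurable function k : [0,1] → [−M, M] such that lim_{n→∞} (1/n) ∑_{i=1}^n F(x_{i,n}) = ∫₀¹ F(k(x)) dx for every continuous function F on [−M, M]. -/
/-!
Sorting `x n 0, …, x n (n-1)` gives the empirical quantile function `q n`, a monotone step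
function on `[0,1]` with `(1/n) ∑ F (x n i) = ∫₀¹ F (q n y) dy`.
By Helly's selection theorem a subsequence of the `q n` converges almost everywhere to a monotone
`k` with values in `[-M, M]`. Dominated convergence identifies the limits of the moments with the
moments of `k`, so all moments of `q n` converge to those of `k`, and Weierstrass approximation
extends this from polynomials to every continuous `F`.
-/

open MeasureTheory Filter

open Set Topology Function

section StepQuantile

theorem List.Pairwise.monotone_getD {α : Type*} [Preorder α] {l : List α} {d : α}
    (hl : l.Pairwise (· ≤ ·)) (hd : ∀ t ∈ l, t ≤ d) : Monotone (l.getD · d) := by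
  intro i j hij
  dsimp only
  rcases lt_or_ge j l.length with hj | hj
  · rw [List.getD_eq_getElem _ _ (hij.trans_lt hj), List.getD_eq_getElem _ _ hj]
    exact hl.rel_get_of_le (a := ⟨i, hij.trans_lt hj⟩) (b := ⟨j, hj⟩) hij
  · rw [List.getD_eq_default _ _ hj]
    rcases lt_or_ge i l.length with hi | hi
    · rw [List.getD_eq_getElem _ _ hi]
      exact hd _ (List.getElem_mem hi)
    · rw [List.getD_eq_default _ _ hi]

theorem List.sum_range_getD {M : Type*} [AddCommMonoid M] {α : Type*} (F : α → M) (d : α)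
    (l : List α) : ∑ i ∈ Finset.range l.length, F (l.getD i d) = (l.map F).sum := by
  induction l with
  | nil => simp
  | cons t l ih =>
    rw [List.length_cons, Finset.sum_range_succ', List.map_cons, List.sum_cons, add_comm]
    simp only [List.getD_cons_succ, List.getD_cons_zero, ih]

variable (a : ℕ → ℝ) (n : ℕ) (d : ℝ)

noncomputable def sortedValues : List ℝ :=
  ((Multiset.range n).map a).sort (· ≤ ·)

theorem length_sortedValues : (sortedValues a n).length = n := by
  simp [sortedValues]

theorem pairwise_sortedValues : (sortedValues a n).Pairwise (· ≤ ·) :=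
  Multiset.pairwise_sort _ _

variable {a n} in
theorem mem_sortedValues {t : ℝ} : t ∈ sortedValues a n ↔ ∃ i < n, a i = t := by
  simp [sortedValues]

theorem sum_range_getD_sortedValues (F : ℝ → ℝ) :
    ∑ i ∈ Finset.range n, F ((sortedValues a n).getD i d) = ∑ i ∈ Finset.range n, F (a i) := by
  have h := List.sum_range_getD F d (sortedValues a n)
  rw [length_sortedValues] at h
  rw [h, ← Multiset.sum_coe, ← Multiset.map_coe, sortedValues,
    Multiset.sort_eq, Multiset.map_map]
  rfl

/-- On `[i/n, (i+1)/n)` this is the `i`-th smallest of `a 0, …, a (n-1)`; it equals `d`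
for `y ≥ 1`. -/
noncomputable def stepQuantile (y : ℝ) : ℝ :=
  (sortedValues a n).getD ⌊y * n⌋.toNat d

variable {a n d}

theorem monotone_stepQuantile (hd : ∀ i < n, a i ≤ d) : Monotone (stepQuantile a n d) := by
  intro y z hyz
  refine (pairwise_sortedValues a n).monotone_getD (fun t ht => ?_) ?_
  · obtain ⟨i, hi, rfl⟩ := mem_sortedValues.1 ht
    exact hd i hi
  · exact Int.toNat_le_toNat (Int.floor_le_floor (by gcongr))

theorem stepQuantile_mem {s : Set ℝ} (ha : ∀ i < n, a i ∈ s) (hd : d ∈ s) (y : ℝ) :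
    stepQuantile a n d y ∈ s := by
  rw [stepQuantile]
  rcases lt_or_ge ⌊y * n⌋.toNat (sortedValues a n).length with h | h
  · rw [List.getD_eq_getElem _ _ h]
    obtain ⟨i, hi, hai⟩ := mem_sortedValues.1 (List.getElem_mem h)
    exact hai ▸ ha i hi
  · rwa [List.getD_eq_default _ _ h]

theorem stepQuantile_eq_getD {i : ℕ} {y : ℝ} (hy : y ∈ Ico ((i : ℝ) / n) (((i : ℝ) + 1) / n)) :
    stepQuantile a n d y = (sortedValues a n).getD i d := by
  have hn : (0 : ℝ) < n := by
    rcases Nat.eq_zero_or_pos n with rfl | h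
    · simp at hy
    · exact_mod_cast h
  have hfloor : ⌊y * n⌋ = i := by
    rw [Int.floor_eq_iff, ← div_le_iff₀ hn, ← lt_div_iff₀ hn]
    push_cast at hy ⊢
    exact hy
  simp [stepQuantile, hfloor]

theorem Ico_zero_one_eq_biUnion (hn : n ≠ 0) :
    Ico (0 : ℝ) 1 = ⋃ i ∈ Finset.range n, Ico ((i : ℝ) / n) (((i : ℝ) + 1) / n) := by
  have hn' : (0 : ℝ) < n := by positivity
  refine subset_antisymm ?_ (iUnion₂_subset fun i hi => Ico_subset_Ico (by positivity) ?_)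
  · simpa [hn'.ne'] using Ico_subset_biUnion_Ico n fun i => (i : ℝ) / n
  · rw [div_le_one hn']
    exact_mod_cast Finset.mem_range.1 hi

theorem integral_comp_stepQuantile (F : ℝ → ℝ) (hn : n ≠ 0) :
    ∫ y in Icc (0 : ℝ) 1, F (stepQuantile a n d y) = 1 / n * ∑ i ∈ Finset.range n, F (a i) := by
  set I : ℕ → Set ℝ := fun i => Ico ((i : ℝ) / n) (((i : ℝ) + 1) / n) with hI
  have hconst (i : ℕ) : EqOn (fun y => F (stepQuantile a n d y))
      (fun _ => F ((sortedValues a n).getD i d)) (I i) :=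
    fun _ hy => congrArg F (stepQuantile_eq_getD hy)
  have hdisj : Pairwise (Disjoint on I) := by
    have hmono : Monotone fun i : ℕ => (i : ℝ) / n := fun i j hij =>
      div_le_div_of_nonneg_right (by exact_mod_cast hij) n.cast_nonneg
    simpa [hI] using hmono.pairwise_disjoint_on_Ico_succ
  have hint (i : ℕ) : IntegrableOn (fun y => F (stepQuantile a n d y)) (I i) :=
    (integrableOn_congr_fun (hconst i) measurableSet_Ico).2
      (integrableOn_const measure_Ico_lt_top.ne)
  have hpiece (i : ℕ) :
      ∫ y in I i, F (stepQuantile a n d y) = 1 / n * F ((sortedValues a n).getD i d) := by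
    rw [setIntegral_congr_fun measurableSet_Ico (hconst i), setIntegral_const,
      Real.volume_real_Ico_of_le (by gcongr; simp), smul_eq_mul]
    ring
  rw [integral_Icc_eq_integral_Ico, Ico_zero_one_eq_biUnion hn,
    integral_biUnion_finset _ (fun i _ => measurableSet_Ico) (hdisj.set_pairwise _)
      fun i _ => hint i,
    ← sum_range_getD_sortedValues a n d, Finset.mul_sum]
  exact Finset.sum_congr rfl fun i _ => hpiece i

end StepQuantile

section Helly

noncomputable def infAbove (G : ℚ → ℝ) (y : ℝ) : ℝ :=
  sInf (G '' {q : ℚ | y < q})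

variable {G : ℚ → ℝ}

theorem nonempty_image_rat_gt (y : ℝ) : (G '' {q : ℚ | y < q}).Nonempty :=
  let ⟨q, hq⟩ := exists_rat_gt y
  ⟨G q, q, hq, rfl⟩

theorem infAbove_le (hG : BddBelow (range G)) {y : ℝ} {q : ℚ} (hq : y < q) :
    infAbove G y ≤ G q :=
  csInf_le (hG.mono (image_subset_range _ _)) ⟨q, hq, rfl⟩

theorem monotone_infAbove (hG : BddBelow (range G)) : Monotone (infAbove G) :=
  fun _ _ hyz => csInf_le_csInf (hG.mono (image_subset_range _ _)) (nonempty_image_rat_gt _)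
    (image_mono fun _ hq => hyz.trans_lt hq)

theorem infAbove_mem_Icc {a b : ℝ} (hG : ∀ q, G q ∈ Icc a b) (y : ℝ) :
    infAbove G y ∈ Icc a b := by
  obtain ⟨q, hq⟩ := exists_rat_gt y
  refine ⟨le_csInf (nonempty_image_rat_gt y) ?_, (infAbove_le ?_ hq).trans (hG q).2⟩
  · rintro _ ⟨q', -, rfl⟩
    exact (hG q').1
  · exact ⟨a, by rintro _ ⟨q', rfl⟩; exact (hG q').1⟩

theorem tendsto_infAbove_of_continuousAt {f : ℕ → ℝ → ℝ} (hf : ∀ j, Monotone (f j))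
    (hfG : ∀ q : ℚ, Tendsto (fun j => f j q) atTop (𝓝 (G q))) (hG : BddBelow (range G))
    {y : ℝ} (hy : ContinuousAt (infAbove G) y) :
    Tendsto (fun j => f j y) atTop (𝓝 (infAbove G y)) := by
  refine tendsto_order.2 ⟨fun c hc => ?_, fun c hc => ?_⟩
  · obtain ⟨z, hcz, hzy⟩ := (((hy.eventually (lt_mem_nhds hc)).filter_mono nhdsWithin_le_nhds).and
      (self_mem_nhdsWithin (s := Iio y))).exists
    obtain ⟨q, hzq, hqy⟩ := exists_rat_btwn hzy
    exact ((tendsto_order.1 (hfG q)).1 c (hcz.trans_le (infAbove_le hG hzq))).mono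
      fun j hj => hj.trans_le (hf j hqy.le)
  · obtain ⟨_, ⟨q, hyq, rfl⟩, hqc⟩ := exists_lt_of_csInf_lt (nonempty_image_rat_gt y) hc
    exact ((tendsto_order.1 (hfG q)).2 c hqc).mono fun j hj => (hf j hyq.le).trans_lt hj

/-- Helly's selection theorem. -/
theorem exists_subseq_tendsto_of_monotone {a b : ℝ} {f : ℕ → ℝ → ℝ} (hf : ∀ n, Monotone (f n))
    (hmem : ∀ n y, f n y ∈ Icc a b) :
    ∃ g : ℝ → ℝ, Monotone g ∧ (∀ y, g y ∈ Icc a b) ∧ ∃ φ : ℕ → ℕ, StrictMono φ ∧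
      ∀ y, ContinuousAt g y → Tendsto (fun j => f (φ j) y) atTop (𝓝 (g y)) := by
  have : CompactSpace (Icc a b) := isCompact_iff_compactSpace.mp isCompact_Icc
  obtain ⟨G, φ, hφ, hG⟩ :=
    CompactSpace.tendsto_subseq fun n (q : ℚ) => (⟨f n q, hmem n q⟩ : Icc a b)
  have hfG (q : ℚ) : Tendsto (fun j => f (φ j) q) atTop (𝓝 (G q : ℝ)) :=
    (continuous_subtype_val.tendsto _).comp (tendsto_pi_nhds.1 hG q)
  have hbdd : BddBelow (range fun q => (G q : ℝ)) := ⟨a, by rintro _ ⟨q, rfl⟩; exact (G q).2.1⟩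
  exact ⟨infAbove fun q => G q, monotone_infAbove hbdd, infAbove_mem_Icc fun q => (G q).2, φ, hφ,
    fun y hy => tendsto_infAbove_of_continuousAt (fun j => hf (φ j)) hfG hbdd hy⟩

end Helly

section Moments

variable {α : Type*} [MeasurableSpace α] {μ : Measure α} {a b : ℝ}

theorem integrable_comp_of_mem_Icc [IsFiniteMeasure μ] {F : ℝ → ℝ} (hF : Continuous F)
    {g : α → ℝ} (hg : Measurable g) (hgm : ∀ x, g x ∈ Icc a b) :
    Integrable (fun x => F (g x)) μ := by
  obtain ⟨C, hC⟩ := isCompact_Icc.exists_bound_of_continuousOn hF.continuousOn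
  exact .of_bound (hF.measurable.comp hg).aestronglyMeasurable C (ae_of_all _ fun x => hC _ (hgm x))

theorem abs_integral_comp_sub_le [IsProbabilityMeasure μ] {F G : ℝ → ℝ} (hF : Continuous F)
    (hG : Continuous G) {ε : ℝ} (hFG : ∀ t ∈ Icc a b, |F t - G t| ≤ ε) {g : α → ℝ}
    (hg : Measurable g) (hgm : ∀ x, g x ∈ Icc a b) :
    |∫ x, F (g x) ∂μ - ∫ x, G (g x) ∂μ| ≤ ε := by
  rw [← integral_sub (integrable_comp_of_mem_Icc hF hg hgm) (integrable_comp_of_mem_Icc hG hg hgm)]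
  simpa using norm_integral_le_of_norm_le_const (μ := μ) (f := fun x => F (g x) - G (g x))
    (ae_of_all _ fun x => hFG _ (hgm x))

theorem tendsto_integral_comp_of_ae_tendsto [IsFiniteMeasure μ] {F : ℝ → ℝ} (hF : Continuous F)
    {g : ℕ → α → ℝ} {k : α → ℝ} (hg : ∀ n, Measurable (g n)) (hgm : ∀ n x, g n x ∈ Icc a b)
    (hlim : ∀ᵐ x ∂μ, Tendsto (fun n => g n x) atTop (𝓝 (k x))) :
    Tendsto (fun n => ∫ x, F (g n x) ∂μ) atTop (𝓝 (∫ x, F (k x) ∂μ)) := by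
  obtain ⟨C, hC⟩ := isCompact_Icc.exists_bound_of_continuousOn hF.continuousOn
  exact tendsto_integral_of_dominated_convergence (fun _ => C)
    (fun n => (hF.measurable.comp (hg n)).aestronglyMeasurable) (integrable_const C)
    (fun n => ae_of_all _ fun x => hC _ (hgm n x)) (hlim.mono fun x hx => (hF.tendsto _).comp hx)

variable {g : ℕ → α → ℝ} {k : α → ℝ} (hg : ∀ n, Measurable (g n)) (hgm : ∀ n x, g n x ∈ Icc a b)
  (hk : Measurable k) (hkm : ∀ x, k x ∈ Icc a b)
  (hmom : ∀ m : ℕ, Tendsto (fun n => ∫ x, g n x ^ m ∂μ) atTop (𝓝 (∫ x, k x ^ m ∂μ)))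
include hg hgm hk hkm hmom

theorem tendsto_integral_eval_of_tendsto_moments [IsFiniteMeasure μ] (p : Polynomial ℝ) :
    Tendsto (fun n => ∫ x, p.eval (g n x) ∂μ) atTop (𝓝 (∫ x, p.eval (k x) ∂μ)) := by
  have hexpand {h : α → ℝ} (hh : Measurable h) (hhm : ∀ x, h x ∈ Icc a b) :
      ∫ x, p.eval (h x) ∂μ = ∑ i ∈ Finset.range (p.natDegree + 1), p.coeff i * ∫ x, h x ^ i ∂μ := by
    simp_rw [Polynomial.eval_eq_sum_range]
    rw [integral_finsetSum _ fun i _ =>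
      (integrable_comp_of_mem_Icc (continuous_pow i) hh hhm).const_mul _]
    simp_rw [integral_const_mul]
  rw [hexpand hk hkm]
  exact (tendsto_finsetSum _ fun i _ => (hmom i).const_mul _).congr fun n =>
    (hexpand (hg n) (hgm n)).symm

theorem tendsto_integral_comp_of_tendsto_moments [IsProbabilityMeasure μ] {F : ℝ → ℝ}
    (hF : Continuous F) :
    Tendsto (fun n => ∫ x, F (g n x) ∂μ) atTop (𝓝 (∫ x, F (k x) ∂μ)) := by
  refine Metric.tendsto_atTop.2 fun ε hε => ?_
  obtain ⟨p, hp⟩ :=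
    exists_polynomial_near_of_continuousOn a b F hF.continuousOn (ε / 4) (by positivity)
  have hpF : ∀ t ∈ Icc a b, |p.eval t - F t| ≤ ε / 4 := fun t ht => (hp t ht).le
  obtain ⟨N, hN⟩ := Metric.tendsto_atTop.1
    (tendsto_integral_eval_of_tendsto_moments hg hgm hk hkm hmom p) (ε / 4) (by positivity)
  refine ⟨N, fun n hn => ?_⟩
  have hgn := abs_le.1 (abs_integral_comp_sub_le p.continuous hF hpF (hg n) (hgm n) (μ := μ))
  have hk' := abs_le.1 (abs_integral_comp_sub_le p.continuous hF hpF hk hkm (μ := μ))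
  have hpn := abs_lt.1 ((Real.dist_eq _ _).symm.trans_lt (hN n hn))
  rw [Real.dist_eq, abs_lt]
  constructor <;> linarith [hgn.1, hgn.2, hk'.1, hk'.2, hpn.1, hpn.2]

end Moments

theorem exists_continuous_eqOn_Icc {a b : ℝ} (hab : a ≤ b) {F : ℝ → ℝ}
    (hF : ContinuousOn F (Icc a b)) : ∃ G : ℝ → ℝ, Continuous G ∧ EqOn G F (Icc a b) :=
  ⟨fun t => F (projIcc a b hab t),
    hF.comp_continuous (continuous_subtype_val.comp continuous_projIcc)
      fun t => (projIcc a b hab t).2,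
    fun t ht => by simp [projIcc_of_mem hab ht]⟩

/-- If bounded real numbers `x i n` (for `i < n`) have convergent power
averages for all powers, then their asymptotic distribution is given by a
measurable function `k : [0,1] → [-M,M]`. -/
theorem exists_spectral_symbol_of_moments (M : ℝ) (hM : 0 < M)
    (x : ℕ → ℕ → ℝ) (hbd : ∀ n : ℕ, ∀ i < n, |x n i| ≤ M)
    (hmom : ∀ k : ℕ, ∃ h : ℝ, Tendsto
      (fun n : ℕ => (1 / (n : ℝ)) * ∑ i ∈ Finset.range n, x n i ^ k)
      atTop (nhds h)) :
    ∃ k : ℝ → ℝ, Measurable k ∧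
      (∀ y ∈ Set.Icc (0:ℝ) 1, k y ∈ Set.Icc (-M) M) ∧
      ∀ F : ℝ → ℝ, ContinuousOn F (Set.Icc (-M) M) →
        Tendsto (fun n : ℕ => (1 / (n : ℝ)) * ∑ i ∈ Finset.range n, F (x n i))
          atTop (nhds (∫ y in Set.Icc (0:ℝ) 1, F (k y))) := by
  have hx (n i : ℕ) (hi : i < n) : x n i ∈ Icc (-M) M := abs_le.1 (hbd n i hi)
  set q : ℕ → ℝ → ℝ := fun n => stepQuantile (x n) n M
  have hq_mono (n : ℕ) : Monotone (q n) := monotone_stepQuantile fun i hi => (hx n i hi).2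
  have hq_mem (n : ℕ) : ∀ y, q n y ∈ Icc (-M) M := stepQuantile_mem (hx n) ⟨by linarith, le_rfl⟩
  have hq_avg (F : ℝ → ℝ) : ∀ᶠ n in atTop,
      ∫ y in Icc (0 : ℝ) 1, F (q n y) = 1 / n * ∑ i ∈ Finset.range n, F (x n i) :=
    (eventually_ne_atTop 0).mono fun n hn => integral_comp_stepQuantile F hn
  obtain ⟨k, hk_mono, hk_mem, φ, hφ, hφk⟩ := exists_subseq_tendsto_of_monotone hq_mono hq_mem
  have : IsProbabilityMeasure (volume.restrict (Icc (0 : ℝ) 1)) := ⟨by simp⟩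
  have hae : ∀ᵐ y ∂volume.restrict (Icc (0 : ℝ) 1),
      Tendsto (fun j => q (φ j) y) atTop (𝓝 (k y)) :=
    ae_restrict_of_ae <| (hk_mono.countable_not_continuousAt.ae_notMem volume).mono
      fun y hy => hφk y (not_not.1 hy)
  have hq_mom (m : ℕ) : Tendsto (fun n => ∫ y in Icc (0 : ℝ) 1, q n y ^ m) atTop
      (𝓝 (∫ y in Icc (0 : ℝ) 1, k y ^ m)) := by
    obtain ⟨h, hh⟩ := hmom m
    have hlim := hh.congr' ((hq_avg _).mono fun n hn => hn.symm)
    have hsub := tendsto_integral_comp_of_ae_tendsto (continuous_pow m)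
      (fun j => (hq_mono (φ j)).measurable) (fun j => hq_mem (φ j)) hae
    rwa [tendsto_nhds_unique (hlim.comp hφ.tendsto_atTop) hsub] at hlim
  refine ⟨k, hk_mono.measurable, fun y _ => hk_mem y, fun F hF => ?_⟩
  obtain ⟨G, hG, hGF⟩ := exists_continuous_eqOn_Icc (by linarith) hF
  have hGk : (fun y => G (k y)) = fun y => F (k y) := funext fun y => hGF (hk_mem y)
  have hGx (n : ℕ) : ∑ i ∈ Finset.range n, G (x n i) = ∑ i ∈ Finset.range n, F (x n i) :=
    Finset.sum_congr rfl fun i hi => hGF (hx n i (Finset.mem_range.1 hi))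
  have hlim := tendsto_integral_comp_of_tendsto_moments (fun n => (hq_mono n).measurable) hq_mem
    hk_mono.measurable hk_mem hq_mom hG
  rw [hGk] at hlim
  exact hlim.congr' ((hq_avg G).mono fun n hn => hn.trans (by rw [hGx]))
end

section
/- Let (A_n) be a sequence of Hermitian matrices A_n ∈ ℂ^{n×n} with operator norms uniformly bounded by M. Then (A_n) admits a spectral symbol (i.e., there exists a measurable f : [0,1] → ℝ with lim_{n→∞} (1/n) ∑_{i=1}^n F(λ_i(A_n)) = ∫₀¹ F(f(x)) dx for all continuous compactly supported F) if and only if lim_{n→∞} (1/n) Tr(A_n^k) exists in ℝ for every k ∈ ℕ. -/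
/-! Normalized traces of powers are the moments `(1/n) ∑ λᵢᵏ` of the eigenvalue distribution. Since
all eigenvalues lie in `[-M, M]`, where polynomials are uniformly dense in continuous functions,
convergence of all moments gives convergence of `(1/n) ∑ F(λᵢ)` for every continuous `F`; conversely
`tᵏ` agrees on `[-M, M]` with a compactly supported continuous function. A symbol is produced by
Helly's selection theorem: the sorted eigenvalues, read as monotone step functions on `[0, 1]`, have
a subsequence converging almost everywhere to a monotone `f`, and since `(1/n) ∑ F(λᵢ)` is the
integral of `F` composed with the step function, dominated convergence makes its limit `∫₀¹ F ∘ f`. -/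

open MeasureTheory Filter

theorem Matrix.IsHermitian.re_trace_pow {𝕜 n : Type*} [RCLike 𝕜] [Fintype n] [DecidableEq n]
    {A : Matrix n n 𝕜} (hA : A.IsHermitian) (k : ℕ) :
    RCLike.re (A ^ k).trace = ∑ i, hA.eigenvalues i ^ k := by
  conv_lhs => rw [hA.spectral_theorem, ← map_pow, Unitary.conjStarAlgAut_apply,
    Matrix.trace_mul_cycle, Unitary.coe_star_mul_self, one_mul, Matrix.diagonal_pow,
    Matrix.trace_diagonal]
  simp only [map_sum, Pi.pow_apply, Function.comp_apply, ← RCLike.ofReal_pow, RCLike.ofReal_re]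

noncomputable def empiricalMean {n : ℕ} (v : Fin n → ℝ) (g : ℝ → ℝ) : ℝ :=
  (1 / (n : ℝ)) * ∑ i, g (v i)

theorem empiricalMean_eval {n : ℕ} (v : Fin n → ℝ) (p : Polynomial ℝ) :
    empiricalMean v p.eval = ∑ k ∈ Finset.range (p.natDegree + 1),
      p.coeff k * empiricalMean v (· ^ k) := by
  simp only [empiricalMean, Polynomial.eval_eq_sum_range, Finset.mul_sum]
  rw [Finset.sum_comm]
  refine Finset.sum_congr rfl fun k _ => Finset.sum_congr rfl fun i _ => by ring

theorem abs_empiricalMean_sub_le {n : ℕ} {v : Fin n → ℝ} {g h : ℝ → ℝ} {ε : ℝ} (hε : 0 ≤ ε)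
    (hgh : ∀ i, |g (v i) - h (v i)| ≤ ε) :
    |empiricalMean v g - empiricalMean v h| ≤ ε := by
  rcases Nat.eq_zero_or_pos n with rfl | hn
  · simpa [empiricalMean] using hε
  calc |empiricalMean v g - empiricalMean v h|
      = (1 / (n : ℝ)) * |∑ i, (g (v i) - h (v i))| := by
        rw [empiricalMean, empiricalMean, ← mul_sub, ← Finset.sum_sub_distrib, abs_mul,
          abs_of_pos (by positivity)]
    _ ≤ (1 / (n : ℝ)) * ∑ _i : Fin n, ε := by
        gcongr
        exact (Finset.abs_sum_le_sum_abs _ _).trans (Finset.sum_le_sum fun i _ => hgh i)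
    _ = ε := by simp; field_simp

theorem Metric.cauchySeq_of_forall_dist_le_cauchySeq {α : Type*} [PseudoMetricSpace α]
    {s : ℕ → α} (h : ∀ ε > 0, ∃ t : ℕ → α, CauchySeq t ∧ ∀ n, dist (s n) (t n) ≤ ε) :
    CauchySeq s := by
  refine Metric.cauchySeq_iff'.2 fun ε hε => ?_
  obtain ⟨t, ht, hst⟩ := h (ε / 4) (by positivity)
  obtain ⟨N, hN⟩ := Metric.cauchySeq_iff'.1 ht (ε / 2) (by positivity)
  refine ⟨N, fun n hn => ?_⟩
  linarith [dist_triangle4 (s n) (t n) (t N) (s N), hst n, hN n hn, dist_comm (s N) (t N), hst N]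

theorem exists_tendsto_empiricalMean_of_tendsto_moments {a b : ℝ} {v : (n : ℕ) → Fin n → ℝ}
    (hv : ∀ n i, v n i ∈ Set.Icc a b)
    (hmom : ∀ k : ℕ, ∃ L, Tendsto (fun n => empiricalMean (v n) (· ^ k)) atTop (nhds L))
    {g : ℝ → ℝ} (hg : Continuous g) :
    ∃ L, Tendsto (fun n => empiricalMean (v n) g) atTop (nhds L) := by
  choose m hm using hmom
  have hpoly (p : Polynomial ℝ) : Tendsto (fun n => empiricalMean (v n) p.eval) atTop
      (nhds (∑ k ∈ Finset.range (p.natDegree + 1), p.coeff k * m k)) := by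
    simp only [empiricalMean_eval]
    exact tendsto_finsetSum _ fun k _ => (hm k).const_mul _
  refine cauchySeq_tendsto_of_complete <| Metric.cauchySeq_of_forall_dist_le_cauchySeq
    fun ε hε => ?_
  obtain ⟨p, hp⟩ := exists_polynomial_near_of_continuousOn a b g hg.continuousOn ε hε
  refine ⟨_, (hpoly p).cauchySeq, fun n => abs_empiricalMean_sub_le hε.le fun i => ?_⟩
  rw [abs_sub_comm]
  exact (hp _ (hv n i)).le

noncomputable def stepFunction {n : ℕ} (v : Fin n → ℝ) (x : ℝ) : ℝ :=
  if hn : 0 < n then v ⟨min (n - 1) (⌈n * x⌉₊ - 1), by omega⟩ else 0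

theorem stepFunction_monotone {n : ℕ} {v : Fin n → ℝ} (hv : Monotone v) :
    Monotone (stepFunction v) := by
  intro x y hxy
  unfold stepFunction
  split_ifs with hn
  · refine hv (Fin.mk_le_mk.2 (min_le_min_left _ (Nat.sub_le_sub_right (Nat.ceil_mono ?_) 1)))
    gcongr
  · rfl

theorem abs_stepFunction_le {n : ℕ} {v : Fin n → ℝ} {C : ℝ} (hC : 0 ≤ C)
    (hv : ∀ i, |v i| ≤ C) (x : ℝ) : |stepFunction v x| ≤ C := by
  unfold stepFunction
  split_ifs
  exacts [hv _, by simpa using hC]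

theorem stepFunction_of_mem_Ioc {n : ℕ} (v : Fin n → ℝ) (i : Fin n) {x : ℝ}
    (hx : x ∈ Set.Ioc ((i : ℝ) / n) ((i + 1) / n)) : stepFunction v x = v i := by
  have hn : 0 < n := i.pos
  have hceil : ⌈n * x⌉₊ = i + 1 := by
    rw [Nat.ceil_eq_iff (Nat.add_one_ne_zero _), Nat.add_sub_cancel, Nat.cast_add_one,
      ← div_lt_iff₀' (by positivity), ← le_div_iff₀' (by positivity)]
    exact hx
  simp only [stepFunction, dif_pos hn, hceil, Nat.add_sub_cancel]
  congr
  omega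

theorem integral_stepFunction {n : ℕ} (hn : 0 < n) (v : Fin n → ℝ) (G : ℝ → ℝ) :
    ∫ x in Set.Icc (0 : ℝ) 1, G (stepFunction v x) = empiricalMean v G := by
  have hpiece (i : Fin n) : Set.EqOn (fun x => G (stepFunction v x)) (fun _ => G (v i))
      (Set.Ioc ((i : ℝ) / n) ((i + 1) / n)) := fun x hx =>
    congrArg G (stepFunction_of_mem_Ioc v i hx)
  have hle (i : Fin n) : (i : ℝ) / n ≤ (i + 1) / n := by gcongr; linarith
  have hsum := intervalIntegral.sum_integral_adjacent_intervals
    (f := fun x => G (stepFunction v x)) (μ := volume) (a := fun k : ℕ => (k : ℝ) / n) (n := n)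
  rw [Nat.cast_zero, zero_div, div_self (by positivity)] at hsum
  rw [integral_Icc_eq_integral_Ioc, ← intervalIntegral.integral_of_le zero_le_one, ← hsum,
    ← Fin.sum_univ_eq_sum_range
      (fun i => ∫ x in (i : ℝ) / n..((i + 1 : ℕ) : ℝ) / n, G (stepFunction v x)),
    empiricalMean, Finset.mul_sum]
  · refine Finset.sum_congr rfl fun i _ => ?_
    rw [Nat.cast_add_one, intervalIntegral.integral_of_le (hle i),
      setIntegral_congr_fun measurableSet_Ioc (hpiece i), setIntegral_const,
      Real.volume_real_Ioc_of_le (hle i), smul_eq_mul]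
    ring
  · intro i hi
    rw [Nat.cast_add_one, intervalIntegrable_iff_integrableOn_Ioc_of_le (hle ⟨i, hi⟩)]
    exact (integrableOn_const measure_Ioc_lt_top.ne).congr_fun (hpiece ⟨i, hi⟩).symm
      measurableSet_Ioc

theorem exists_strictMono_tendsto_rat_of_bounded {u : ℕ → ℝ → ℝ} {C : ℝ}
    (hu : ∀ n x, |u n x| ≤ C) :
    ∃ (g : ℚ → ℝ) (φ : ℕ → ℕ), StrictMono φ ∧
      ∀ q : ℚ, Tendsto (fun k => u (φ k) q) atTop (nhds (g q)) := by
  have hcompact : IsCompact (Set.univ.pi fun _ : ℚ => Set.Icc (-C) C) :=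
    isCompact_univ_pi fun _ => isCompact_Icc
  obtain ⟨g, -, φ, hφ, hg⟩ := hcompact.tendsto_subseq
    (x := fun n (q : ℚ) => u n q) fun n q _ => abs_le.1 (hu n q)
  exact ⟨g, φ, hφ, tendsto_pi_nhds.1 hg⟩

theorem exists_monotone_tendsto_of_tendsto_rat {ι : Type*} {l : Filter ι} [l.NeBot]
    {u : ι → ℝ → ℝ} (hu : ∀ k, Monotone (u k)) {g : ℚ → ℝ}
    (hg : ∀ q : ℚ, Tendsto (fun k => u k q) l (nhds (g q))) :
    ∃ f : ℝ → ℝ, Monotone f ∧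
      ∀ x, ContinuousAt f x → Tendsto (fun k => u k x) l (nhds (f x)) := by
  have hg_mono : Monotone g := fun q r hqr =>
    le_of_tendsto_of_tendsto' (hg q) (hg r) fun k => hu k (by exact_mod_cast hqr)
  have hne (x : ℝ) : Nonempty {q : ℚ // (q : ℝ) < x} :=
    let ⟨q, hq⟩ := exists_rat_lt x; ⟨⟨q, hq⟩⟩
  have hbdd (x : ℝ) : BddAbove (Set.range fun q : {q : ℚ // (q : ℝ) < x} => g q) := by
    obtain ⟨r, hr⟩ := exists_rat_gt x
    exact ⟨g r, by rintro _ ⟨q, rfl⟩; exact hg_mono (by exact_mod_cast (q.2.trans hr).le)⟩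
  -- the left-continuous extension of `g` from the rationals
  set f : ℝ → ℝ := fun x => ⨆ q : {q : ℚ // (q : ℝ) < x}, g q
  have hg_le_f {q : ℚ} {x : ℝ} (h : (q : ℝ) < x) : g q ≤ f x := le_ciSup (hbdd x) ⟨q, h⟩
  refine ⟨f, fun x y hxy => ciSup_le fun q => hg_le_f (q.2.trans_le hxy), fun x hc => ?_⟩
  refine tendsto_order.2 ⟨fun a ha => ?_, fun b hb => ?_⟩
  · obtain ⟨q, hq⟩ := exists_lt_of_lt_ciSup ha
    filter_upwards [(hg q).eventually (lt_mem_nhds hq)] with k hk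
    exact hk.trans_le (hu k q.2.le)
  · obtain ⟨z, hfz, hxz⟩ := ((hc.eventually (gt_mem_nhds hb)).filter_mono nhdsWithin_le_nhds
      |>.and (self_mem_nhdsWithin (s := Set.Ioi x))).exists
    obtain ⟨q, hxq, hqz⟩ := exists_rat_btwn hxz
    filter_upwards [(hg q).eventually (gt_mem_nhds ((hg_le_f hqz).trans_lt hfz))] with k hk
    exact (hu k hxq.le).trans_lt hk

theorem exists_monotone_subseq_tendsto_ae {u : ℕ → ℝ → ℝ} {C : ℝ}
    (hu : ∀ n, Monotone (u n)) (hbd : ∀ n x, |u n x| ≤ C) :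
    ∃ (f : ℝ → ℝ) (φ : ℕ → ℕ), Monotone f ∧ StrictMono φ ∧
      ∀ᵐ x, Tendsto (fun k => u (φ k) x) atTop (nhds (f x)) := by
  obtain ⟨g, φ, hφ, hg⟩ := exists_strictMono_tendsto_rat_of_bounded hbd
  obtain ⟨f, hf, hconv⟩ := exists_monotone_tendsto_of_tendsto_rat (fun k => hu (φ k)) hg
  refine ⟨f, φ, hf, hφ, ?_⟩
  filter_upwards [hf.countable_not_continuousAt.ae_notMem volume] with x hx
  exact hconv x (not_not.1 hx)

theorem exists_continuous_hasCompactSupport_eqOn {X : Type*} [TopologicalSpace X]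
    [RegularSpace X] [LocallyCompactSpace X] {h : X → ℝ} (hh : Continuous h) {K : Set X}
    (hK : IsCompact K) :
    ∃ F : X → ℝ, Continuous F ∧ HasCompactSupport F ∧ Set.EqOn F h K := by
  obtain ⟨φ, hφK, -, hφs, -⟩ := exists_continuous_one_zero_of_isCompact hK isClosed_empty
    (Set.disjoint_empty K)
  exact ⟨h * φ, hh.mul φ.continuous, hφs.mul_left, fun x hx => by simp [hφK hx]⟩

theorem tendsto_integral_comp_of_tendsto_ae {α : Type*} [MeasurableSpace α] {μ : Measure α}
    [IsFiniteMeasure μ] {F : ℝ → ℝ} {C : ℝ} (hF : Continuous F) (hFC : ∀ y, ‖F y‖ ≤ C)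
    {u : ℕ → α → ℝ} {f : α → ℝ} (hu : ∀ k, AEStronglyMeasurable (u k) μ)
    (hlim : ∀ᵐ x ∂μ, Tendsto (fun k => u k x) atTop (nhds (f x))) :
    Tendsto (fun k => ∫ x, F (u k x) ∂μ) atTop (nhds (∫ x, F (f x) ∂μ)) :=
  tendsto_integral_of_dominated_convergence (fun _ => C)
    (fun k => hF.comp_aestronglyMeasurable (hu k)) (integrable_const C)
    (fun _ => .of_forall fun _ => hFC _)
    (hlim.mono fun _ hx => (hF.tendsto _).comp hx)

/-- A sequence of Hermitian matrices with eigenvalues uniformly bounded by `M`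
admits a spectral symbol iff all normalized traces of powers converge. -/
theorem hermitian_spectral_symbol_iff_trace_moments (M : ℝ)
    (A : (n : ℕ) → Matrix (Fin n) (Fin n) ℂ)
    (hherm : ∀ n, (A n).IsHermitian)
    (hbd : ∀ n, ∀ i : Fin n, |(hherm n).eigenvalues i| ≤ M) :
    (∃ f : ℝ → ℝ, Measurable f ∧
        ∀ F : ℝ → ℝ, Continuous F → HasCompactSupport F →
          Tendsto (fun n : ℕ => (1 / (n : ℝ)) *
              ∑ i : Fin n, F ((hherm n).eigenvalues i))
            atTop (nhds (∫ x in Set.Icc (0:ℝ) 1, F (f x)))) ↔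
      ∀ k : ℕ, ∃ L : ℝ,
        Tendsto (fun n : ℕ => (1 / (n : ℝ)) * ((A n ^ k).trace).re)
          atTop (nhds L) := by
  set eig := fun n => (hherm n).eigenvalues
  have htrace (n k : ℕ) : (1 / (n : ℝ)) * ((A n ^ k).trace).re = empiricalMean (eig n) (· ^ k) :=
    congrArg _ ((hherm n).re_trace_pow k)
  simp only [htrace]
  constructor
  · rintro ⟨f, -, hf⟩ k
    obtain ⟨F, hF, hFs, hFk⟩ := exists_continuous_hasCompactSupport_eqOn (continuous_pow k)
      (isCompact_Icc (a := -M) (b := M))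
    refine ⟨_, (hf F hF hFs).congr fun n => ?_⟩
    unfold empiricalMean
    exact congrArg _ (Finset.sum_congr rfl fun i _ => hFk (abs_le.1 (hbd n i)))
  · intro hmom
    have hM : 0 ≤ M := (abs_nonneg _).trans (hbd 1 0)
    set sorted := fun n => eig n ∘ Tuple.sort (eig n)
    obtain ⟨f, φ, hf, hφ, hae⟩ := exists_monotone_subseq_tendsto_ae
      (fun n => stepFunction_monotone (Tuple.monotone_sort (eig n)))
      (fun n => abs_stepFunction_le (v := sorted n) hM fun i => hbd n _)
    refine ⟨f, hf.measurable, fun F hF hFs => ?_⟩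
    obtain ⟨L, hL⟩ := exists_tendsto_empiricalMean_of_tendsto_moments
      (fun n i => abs_le.1 (hbd n i)) hmom hF
    obtain ⟨C, hC⟩ := hFs.exists_bound_of_continuous hF
    have hint := tendsto_integral_comp_of_tendsto_ae (μ := volume.restrict (Set.Icc 0 1)) hF hC
      (fun k => (stepFunction_monotone (Tuple.monotone_sort _)).measurable.aestronglyMeasurable)
      (ae_restrict_of_ae hae)
    have hsub : Tendsto (fun k => ∫ x in Set.Icc (0 : ℝ) 1, F (stepFunction (sorted (φ k)) x))
        atTop (nhds L) := by
      refine (hL.comp hφ.tendsto_atTop).congr' ?_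
      filter_upwards [eventually_gt_atTop 0] with k hk
      rw [integral_stepFunction (hk.trans_le hφ.le_apply), Function.comp_apply]
      exact congrArg _ (Equiv.sum_comp (Tuple.sort _) _).symm
    rwa [tendsto_nhds_unique hsub hint] at hL
end

section
/- Let (N_d)_{d≥1} be a sequence of integers of the form N_d = a^d + 1 − c_d where a ∈ ℤ and c_d = 0 for d odd, c_d = 2n k^{d/2} for d even (k, n ∈ ℕ). Then for every m ∈ ℕ, ∑_{d|m} μ(m/d) N_d ≡ 0 (mod m), where μ is the Möbius function; hence B_m = (1/m) ∑_{d|m} μ(m/d) N_d is an integer. -/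
/-!
Each of `a ^ d` and `1 ^ d` satisfies the Gauss congruence `m ∣ ∑_{d ∣ m} μ(m/d) x^d`.
The `c_d` part vanishes for odd `m`, and for `m = 2m'` only the even divisors `d = 2e`
contribute, giving `2n ∑_{e ∣ m'} μ(m'/e) k^e`, which is divisible by `2m'` by the Gauss
congruence for `k`.

The Gauss congruence is checked one prime power at a time. For `m = p^(ν+1) r` with `p ∤ r`, the
divisors of `m` are the products `p^i e` with `e ∣ r`, and `μ(p^i e) = 0` for `i ≥ 2`. The two
remaining terms for a given `e` combine to `μ(e) (b^(p^(ν+1)) - b^(p^ν))` with `b = a^(r/e)`,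
and Fermat's little theorem, lifted to prime powers, makes this divisible by `p^(ν+1)`.
-/

open ArithmeticFunction Finset
open scoped ArithmeticFunction.Moebius

theorem Int.prime_pow_succ_dvd_pow_sub_pow (b : ℤ) {p : ℕ} (hp : p.Prime) (ν : ℕ) :
    (p : ℤ) ^ (ν + 1) ∣ b ^ p ^ (ν + 1) - b ^ p ^ ν := by
  have hfermat : (p : ℤ) ∣ b ^ p - b := by
    have := Fact.mk hp
    exact (ZMod.intCast_zmod_eq_zero_iff_dvd _ p).1 (by push_cast; rw [ZMod.pow_card, sub_self])
  rw [pow_succ' p ν, pow_mul]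
  exact dvd_sub_pow_of_dvd_sub hfermat ν

theorem Nat.Coprime.sum_divisors_mul_eq_sum_sum {M : Type*} [AddCommMonoid M] {m n : ℕ}
    (hmn : m.Coprime n) (f : ℕ → M) :
    ∑ d ∈ (m * n).divisors, f d = ∑ i ∈ m.divisors, ∑ j ∈ n.divisors, f (i * j) := by
  rw [hmn.divisors_mul, sum_map]
  exact (sum_attach _ fun x => f (x.1 * x.2)).trans (sum_product ..)

theorem Nat.sum_divisors_mul_eq_of_not_dvd_eq_zero {M : Type*} [AddCommMonoid M] {p : ℕ}
    (hp : p ≠ 0) (m : ℕ) {f : ℕ → M} (hf : ∀ d, ¬p ∣ d → f d = 0) :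
    ∑ d ∈ (p * m).divisors, f d = ∑ e ∈ m.divisors, f (p * e) := by
  rw [← sum_image fun _ _ _ _ => Nat.eq_of_mul_eq_mul_left (Nat.pos_of_ne_zero hp)]
  refine (sum_subset (fun d hd => ?_) fun d hd hd' => hf d fun ⟨e, he⟩ => hd' ?_).symm
  · obtain ⟨e, he, rfl⟩ := mem_image.1 hd
    obtain ⟨he, hm⟩ := Nat.mem_divisors.1 he
    exact Nat.mem_divisors.2 ⟨mul_dvd_mul_left p he, mul_ne_zero hp hm⟩
  · obtain ⟨hdm, hm⟩ := Nat.mem_divisors.1 hd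
    subst he
    refine mem_image.2 ⟨e, Nat.mem_divisors.2 ⟨?_, right_ne_zero_of_mul hm⟩, rfl⟩
    exact (Nat.mul_dvd_mul_iff_left (Nat.pos_of_ne_zero hp)).1 hdm

theorem sum_divisors_prime_pow_succ_moebius_smul {M : Type*} [AddCommGroup M] (g : ℕ → M)
    {p : ℕ} (hp : p.Prime) (ν : ℕ) :
    ∑ d ∈ (p ^ (ν + 1)).divisors, μ d • g d = g 1 - g p := by
  rw [Nat.sum_divisors_prime_pow hp, sum_range_succ', sum_range_succ',
    sum_eq_zero fun i _ => by
      rw [moebius_apply_prime_pow hp (by omega), if_neg (by omega), zero_smul]]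
  simp [moebius_apply_prime hp, sub_eq_neg_add]

theorem prime_pow_dvd_sum_moebius_mul_pow (a : ℤ) {p r : ℕ} (hp : p.Prime) (hpr : ¬p ∣ r)
    (ν : ℕ) : (p : ℤ) ^ ν ∣ ∑ d ∈ (p ^ ν * r).divisors, μ d * a ^ (p ^ ν * r / d) := by
  cases ν with
  | zero => simp
  | succ ν =>
  have hcop : (p ^ (ν + 1)).Coprime r := ((hp.coprime_iff_not_dvd).2 hpr).pow_left _
  rw [hcop.sum_divisors_mul_eq_sum_sum, sum_comm]
  refine dvd_sum fun e he => ?_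
  have he : e ∣ r := Nat.dvd_of_mem_divisors he
  have hsplit : ∀ d ∈ (p ^ (ν + 1)).divisors,
      μ (d * e) * a ^ (p ^ (ν + 1) * r / (d * e))
        = μ d • (μ e * (a ^ (r / e)) ^ (p ^ (ν + 1) / d)) := by
    intro d hd
    have hd : d ∣ p ^ (ν + 1) := Nat.dvd_of_mem_divisors hd
    rw [isMultiplicative_moebius.map_mul_of_coprime
        ((hcop.coprime_dvd_left hd).coprime_dvd_right he),
      Nat.mul_div_mul_comm hd he, ← pow_mul', smul_eq_mul]
    ring
  rw [sum_congr rfl hsplit, sum_divisors_prime_pow_succ_moebius_smul _ hp, Nat.div_one,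
    pow_succ p ν, Nat.mul_div_cancel _ hp.pos, ← pow_succ, ← mul_sub]
  exact dvd_mul_of_dvd_right (Int.prime_pow_succ_dvd_pow_sub_pow _ hp ν) _

theorem dvd_sum_moebius_div_mul_pow (a : ℤ) (m : ℕ) :
    (m : ℤ) ∣ ∑ d ∈ m.divisors, μ (m / d) * a ^ d := by
  rcases eq_or_ne m 0 with rfl | hm
  · simp
  rw [← Nat.sum_divisorsAntidiagonal' fun x y => μ x * a ^ y,
    Nat.sum_divisorsAntidiagonal fun x y => μ x * a ^ y, Int.natCast_dvd,
    Nat.dvd_iff_prime_pow_dvd_dvd]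
  intro p k hp hpk
  obtain ⟨ν, r, hpr, rfl⟩ := Nat.exists_eq_pow_mul_and_not_dvd hm p hp.ne_one
  have hk : p ^ k ∣ p ^ ν :=
    (((hp.coprime_iff_not_dvd).2 hpr).pow_left k).dvd_of_dvd_mul_right hpk
  rw [← Int.natCast_dvd]
  exact (Int.natCast_dvd_natCast.2 hk).trans
    (mod_cast prime_pow_dvd_sum_moebius_mul_pow a hp hpr ν)

theorem dvd_sum_moebius_div_mul_ite_odd (b x : ℤ) (m : ℕ) :
    (m : ℤ) ∣
      ∑ d ∈ m.divisors, μ (m / d) * (if Odd d then 0 else 2 * x * b ^ (d / 2)) := by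
  obtain ⟨m, rfl | rfl⟩ := Nat.even_or_odd' m
  · rw [Nat.sum_divisors_mul_eq_of_not_dvd_eq_zero two_ne_zero m fun d hd => by
      rw [if_pos (Nat.odd_iff.2 (by omega)), mul_zero]]
    have hterm : ∀ e ∈ m.divisors,
        μ (2 * m / (2 * e)) * (if Odd (2 * e) then 0 else 2 * x * b ^ (2 * e / 2))
          = 2 * x * (μ (m / e) * b ^ e) := by
      intro e _
      rw [if_neg (by simp), Nat.mul_div_mul_left _ _ two_pos, Nat.mul_div_cancel_left _ two_pos]
      ring
    rw [sum_congr rfl hterm, ← mul_sum, Nat.cast_mul, Nat.cast_two, mul_assoc]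
    exact mul_dvd_mul_left 2 (dvd_mul_of_dvd_right (dvd_sum_moebius_div_mul_pow b m) x)
  · have hodd : ∀ d ∈ (2 * m + 1).divisors, Odd d := fun d hd =>
      (odd_two_mul_add_one m).of_dvd_nat (Nat.dvd_of_mem_divisors hd)
    rw [sum_eq_zero fun d hd => by rw [if_pos (hodd d hd), mul_zero]]
    exact dvd_zero _

/-- For the integer sequence `N_d = a^d + 1 - c_d` (with `c_d = 0` for odd `d`
and `c_d = 2n k^{d/2}` for even `d`), every Möbius-inverted sum
`∑_{d∣m} μ(m/d) N_d` is divisible by `m`, so `B_m` is an integer. -/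
theorem moebius_sum_divisible (a : ℤ) (k n : ℕ)
    (c : ℕ → ℤ) (hc : ∀ d : ℕ, c d = if Odd d then 0 else 2 * n * (k : ℤ) ^ (d / 2))
    (N : ℕ → ℤ) (hN : ∀ d : ℕ, 1 ≤ d → N d = a ^ d + 1 - c d) :
    ∀ m : ℕ, 1 ≤ m →
      (m : ℤ) ∣ ∑ d ∈ m.divisors, (moebius (m / d) : ℤ) * N d := by
  intro m _
  have hsplit : ∀ d ∈ m.divisors,
      μ (m / d) * N d = μ (m / d) * a ^ d + μ (m / d) * 1 ^ d - μ (m / d) * c d := by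
    intro d hd
    rw [hN d (Nat.pos_of_mem_divisors hd)]
    ring
  rw [sum_congr rfl hsplit, sum_sub_distrib, sum_add_distrib]
  refine dvd_sub (dvd_add (dvd_sum_moebius_div_mul_pow a m) (dvd_sum_moebius_div_mul_pow 1 m)) ?_
  simp only [hc]
  exact dvd_sum_moebius_div_mul_ite_odd k n m
end
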